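/- arXiv:1604.00459 — 4 statements merged into one kernel-verified Lean document; each statement's English description precedes it below -/
import Mathlib

section
/- Let L be a real n×n Laplacian matrix, D a diagonal matrix with entries d_i ∈ {0,1}, c > 0, and suppose λ ∈ ℂ is an eigenvalue of -(L + cD) with Re(λ) ≥ 0. Then λ = 0 and, moreover, for the Gershgorin row index q realizing the disc containing λ, any such q with d_q = 1 leads to a contradiction; in particular if all rows have d_i = 1 then -(L+cD) has no eigenvalue with nonnegative real part. -/
/-!
By Gershgorin, `λ` lies in a disc centred at `-(L q q + c d q)` whose radius
`∑_{j ≠ q} |L q j|` equals `L q q` for a Laplacian. Such a disc lies in the closed left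
half-plane and meets the imaginary axis only at `0`, and only when `c d q = 0`, i.e. `d q = 0`.
-/

theorem Matrix.exists_mem_closedBall_of_mem_spectrum {K ι : Type*} [NormedField K] [Fintype ι]
    [DecidableEq ι] {A : Matrix ι ι K} {μ : K} (hμ : μ ∈ spectrum K A) :
    ∃ k, μ ∈ Metric.closedBall (A k k) (∑ j ∈ Finset.univ.erase k, ‖A k j‖) :=
  eigenvalue_mem_ball (Module.End.hasEigenvalue_iff_mem_spectrum.mpr (by rwa [Matrix.spectrum_toLin']))

theorem Matrix.sum_norm_erase_eq_diag_of_laplacian {ι : Type*} [Fintype ι] [DecidableEq ι]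
    {L : Matrix ι ι ℝ} (hoff : ∀ i j, i ≠ j → L i j ≤ 0)
    (hdiag : ∀ i, L i i = -∑ j ∈ Finset.univ.erase i, L i j) (i : ι) :
    ∑ j ∈ Finset.univ.erase i, ‖L i j‖ = L i i := by
  rw [hdiag i, ← Finset.sum_neg_distrib]
  refine Finset.sum_congr rfl fun j hj => ?_
  rw [Real.norm_eq_abs, abs_of_nonpos (hoff i j (Finset.ne_of_mem_erase hj).symm)]

theorem Complex.eq_zero_of_norm_sub_le_of_re_nonneg {z : ℂ} {r s : ℝ} (hs : 0 ≤ s)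
    (hz : 0 ≤ z.re) (h : ‖z - ↑(-(r + s))‖ ≤ r) : z = 0 ∧ s = 0 := by
  have hre : z.re + r + s ≤ r :=
    calc z.re + r + s = (z - ↑(-(r + s))).re := by simp only [Complex.sub_re, Complex.ofReal_re]; ring
      _ ≤ ‖z - ↑(-(r + s))‖ := Complex.re_le_norm _
      _ ≤ r := h
  obtain ⟨hre0, rfl⟩ : z.re = 0 ∧ s = 0 := ⟨by linarith, by linarith⟩
  have hr : 0 ≤ r := (norm_nonneg _).trans h
  have hsq : ‖z - ↑(-(r + 0))‖ ^ 2 ≤ r ^ 2 := pow_le_pow_left₀ (norm_nonneg _) h 2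
  rw [Complex.sq_norm, Complex.normSq_apply] at hsq
  simp only [Complex.sub_re, Complex.sub_im, Complex.ofReal_re, Complex.ofReal_im, hre0] at hsq
  have him : z.im = 0 := by nlinarith
  exact ⟨Complex.ext hre0 him, rfl⟩

/-- If `λ` is an eigenvalue of `-(L + cD)` with `Re λ ≥ 0`, where `L` is a Laplacian,
`D` a 0-1 diagonal matrix and `c > 0`, then `λ = 0`; moreover if every node is pinned
(`d i = 1` for all `i`) this is impossible. -/
theorem pinned_laplacian_eigenvalue (n : ℕ) (L : Matrix (Fin n) (Fin n) ℝ)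
    (d : Fin n → ℝ) (c : ℝ)
    (hoff : ∀ i j, i ≠ j → L i j ≤ 0)
    (hdiag : ∀ i, L i i = -∑ j ∈ Finset.univ.erase i, L i j)
    (hd : ∀ i, d i = 0 ∨ d i = 1) (hc : 0 < c)
    (lam : ℂ)
    (hlam : lam ∈ spectrum ℂ ((-(L + c • Matrix.diagonal d)).map Complex.ofReal))
    (hre : 0 ≤ lam.re) :
    lam = 0 ∧ ((∀ i, d i = 1) → False) := by
  obtain ⟨q, hq⟩ := Matrix.exists_mem_closedBall_of_mem_spectrum hlam
  have hcenter : (-(L + c • Matrix.diagonal d)).map Complex.ofReal q q =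
      ↑(-(L q q + c * d q)) := by
    simp
  have hradius : ∑ j ∈ Finset.univ.erase q,
      ‖(-(L + c • Matrix.diagonal d)).map Complex.ofReal q j‖ = L q q := by
    rw [← Matrix.sum_norm_erase_eq_diag_of_laplacian hoff hdiag q]
    refine Finset.sum_congr rfl fun j hj => ?_
    simp [Matrix.diagonal_apply_ne _ (Finset.ne_of_mem_erase hj).symm]
  rw [Metric.mem_closedBall, hcenter, hradius, dist_eq_norm] at hq
  have hcd : 0 ≤ c * d q := mul_nonneg hc.le (by rcases hd q with h | h <;> simp [h])
  obtain ⟨rfl, hcd0⟩ := Complex.eq_zero_of_norm_sub_le_of_re_nonneg hcd hre hq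
  exact ⟨rfl, fun hall => by simp [hall q, hc.ne'] at hcd0⟩
end

section
/- For the scalar delay equation ẏ(t) = -y(t - τ) with τ ≥ 0, all roots λ of the characteristic equation λ + exp(-λτ) = 0 satisfy Re(λ) < 0 if and only if τ < π/2. -/
open Real Set

lemma root_iff (τ : ℝ) (lam : ℂ) :
    lam + Complex.exp (-(lam * τ)) = 0 ↔
      lam.re + Real.exp (-(lam.re*τ)) * Real.cos (lam.im*τ) = 0 ∧
      lam.im - Real.exp (-(lam.re*τ)) * Real.sin (lam.im*τ) = 0 := by
  rw [Complex.ext_iff]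
  simp only [Complex.add_re, Complex.add_im, Complex.exp_re, Complex.exp_im,
    Complex.neg_re, Complex.neg_im, Complex.mul_re, Complex.mul_im,
    Complex.ofReal_re, Complex.ofReal_im, Complex.zero_re, Complex.zero_im,
    Real.cos_neg, Real.sin_neg, mul_zero, sub_zero, zero_mul, add_zero, zero_add]
  constructor
  · rintro ⟨h1, h2⟩; constructor <;> linarith
  · rintro ⟨h1, h2⟩; constructor <;> linarith

/-- Hayes criterion: all roots of `λ + e^{-λτ} = 0` have negative real part
iff `τ < π/2` (for `τ ≥ 0`). -/
theorem hayes_criterion (τ : ℝ) (hτ : 0 ≤ τ) :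
    (∀ lam : ℂ, lam + Complex.exp (-(lam * τ)) = 0 → lam.re < 0) ↔ τ < Real.pi / 2 := by
  have hπ := Real.pi_pos
  constructor
  · -- forward: contrapositive
    intro hroots
    by_contra hge
    push_neg at hge
    have hτ0 : 0 < τ := lt_of_lt_of_le (by linarith) hge
    set u : ℝ := min (π/4) (π/(4*τ)) with hu
    have hu0 : 0 < u := lt_min (by linarith) (by positivity)
    have hu4 : u ≤ π/4 := min_le_left _ _
    set s1 : ℝ := π - u with hs1def
    have hs1a : π/2 < s1 := by rw [hs1def]; linarith
    have hs1b : s1 < π := by rw [hs1def]; linarith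
    set H : ℝ → ℝ := fun s => τ * (Real.exp (s * Real.cos s / Real.sin s) * Real.sin s) - s
      with hHdef
    have hsinpos : ∀ s ∈ Icc (π/2) s1, 0 < Real.sin s := fun s hs =>
      Real.sin_pos_of_pos_of_lt_pi (by linarith [hs.1]) (by linarith [hs.2])
    have hcont : ContinuousOn H (Icc (π/2) s1) := by
      apply ContinuousOn.sub _ continuousOn_id
      apply ContinuousOn.mul continuousOn_const
      apply ContinuousOn.mul _ Real.continuous_sin.continuousOn
      apply Real.continuous_exp.comp_continuousOn
      exact ContinuousOn.div ((continuous_id.mul Real.continuous_cos).continuousOn)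
        Real.continuous_sin.continuousOn (fun s hs => (hsinpos s hs).ne')
    have hH1 : H (π/2) = τ - π/2 := by
      simp [hHdef, Real.sin_pi_div_two, Real.cos_pi_div_two]
    have hcos1 : Real.cos s1 ≤ 0 :=
      Real.cos_nonpos_of_pi_div_two_le_of_le hs1a.le (by linarith)
    have hsin1 : 0 < Real.sin s1 := hsinpos s1 ⟨hs1a.le, le_refl _⟩
    have hexp1 : Real.exp (s1 * Real.cos s1 / Real.sin s1) ≤ 1 := by
      apply Real.exp_le_one_iff.mpr
      apply div_nonpos_of_nonpos_of_nonneg _ hsin1.le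
      exact mul_nonpos_of_nonneg_of_nonpos (by linarith) hcos1
    have hsinu : Real.sin s1 ≤ u := by
      rw [hs1def, Real.sin_pi_sub]
      exact Real.sin_le hu0.le
    have huτ : u * τ ≤ π/4 := by
      have h2 : u ≤ π/(4*τ) := min_le_right _ _
      calc u * τ ≤ (π/(4*τ)) * τ := by nlinarith
        _ = π/4 := by field_simp
    have hHs1 : H s1 < 0 := by
      have hb : τ * (Real.exp (s1 * Real.cos s1 / Real.sin s1) * Real.sin s1) ≤ π/4 := by
        have : Real.exp (s1 * Real.cos s1 / Real.sin s1) * Real.sin s1 ≤ Real.sin s1 := by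
          nlinarith
        nlinarith
      rw [hHdef]; simp only
      have : π/2 < s1 := hs1a
      linarith
    have hmem : (0:ℝ) ∈ Icc (H s1) (H (π/2)) := ⟨hHs1.le, by rw [hH1]; linarith⟩
    obtain ⟨s, hsmem, hHs⟩ := intermediate_value_Icc' hs1a.le hcont hmem
    have hssin : 0 < Real.sin s := hsinpos s hsmem
    have hscos : Real.cos s ≤ 0 :=
      Real.cos_nonpos_of_pi_div_two_le_of_le hsmem.1 (by linarith [hsmem.2])
    have hs0 : 0 < s := by linarith [hsmem.1]
    have hEeq : Real.exp (s * Real.cos s / Real.sin s) * Real.sin s = s / τ := by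
      have : τ * (Real.exp (s * Real.cos s / Real.sin s) * Real.sin s) - s = 0 := hHs
      field_simp
      linarith
    set y : ℝ := s / τ with hy
    set x : ℝ := -(y * (Real.cos s / Real.sin s)) with hx
    have hy0 : 0 < y := by positivity
    have hyτ : y * τ = s := div_mul_cancel₀ s hτ0.ne'
    have hxτ : -(x*τ) = s * Real.cos s / Real.sin s := by
      rw [hx, hy]; field_simp
    have hE : Real.exp (-(x*τ)) = y / Real.sin s := by
      rw [hxτ, eq_div_iff hssin.ne']
      exact hEeq
    have hx0 : 0 ≤ x := by
      rw [hx]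
      have : Real.cos s / Real.sin s ≤ 0 := div_nonpos_of_nonpos_of_nonneg hscos hssin.le
      nlinarith
    have hroot : (⟨x, y⟩ : ℂ) + Complex.exp (-((⟨x, y⟩ : ℂ) * τ)) = 0 := by
      rw [root_iff]
      constructor
      · show x + Real.exp (-(x*τ)) * Real.cos (y*τ) = 0
        rw [hE, hyτ, hx]
        field_simp
        ring
      · show y - Real.exp (-(x*τ)) * Real.sin (y*τ) = 0
        rw [hE, hyτ]
        field_simp
        ring
    have hlt := hroots ⟨x, y⟩ hroot
    have hre : (⟨x, y⟩ : ℂ).re = x := rfl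
    rw [hre] at hlt
    linarith
  · -- backward
    intro hlt lam hroot
    rw [root_iff] at hroot
    obtain ⟨h1, h2⟩ := hroot
    set x := lam.re with hx
    set y := lam.im with hy
    by_contra hxn
    push_neg at hxn
    have hE1 : Real.exp (-(x*τ)) ≤ 1 := by
      apply Real.exp_le_one_iff.mpr
      nlinarith
    have hEpos : 0 < Real.exp (-(x*τ)) := Real.exp_pos _
    have hsb := Real.neg_one_le_sin (y*τ)
    have hsb' := Real.sin_le_one (y*τ)
    have hy1 : |y| ≤ 1 := by
      rw [abs_le]
      constructor <;> nlinarith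
    have hyτ : |y*τ| < π/2 := by
      rw [abs_mul, abs_of_nonneg hτ]
      rcases abs_nonneg y with h
      nlinarith [abs_nonneg y]
    have hcos : 0 < Real.cos (y*τ) := by
      apply Real.cos_pos_of_mem_Ioo
      rw [abs_lt] at hyτ
      exact ⟨by linarith [hyτ.1], hyτ.2⟩
    nlinarith [mul_pos hEpos hcos]
end

section
/- Let K, A be real n×n matrices with K diagonal, K_{ii} ≥ 0, A_{ij} ≥ 0, and ∑_j A_{ij} = K_{ii} for each i (i.e., L = K - A is a Laplacian). Then for any τ_r ≥ 0, every root λ ∈ ℂ of det(λI + K - A·exp(-λτ_r)) = 0 with Re(λ) ≥ 0 satisfies λ = 0. -/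
/-!
If `det (λI + K - e A) = 0`, Gershgorin's theorem gives a row `q` with
`‖λ + K_qq - e A_qq‖ ≤ ‖e‖ ∑_{j ≠ q} A_qj`. For `Re λ ≥ 0` and `τ_r ≥ 0` the delay factor
`e = exp (-λ τ_r)` has `‖e‖ ≤ 1`, so, the row sums of `A` being the diagonal of `K`,
`‖λ + K_qq‖ ≤ K_qq`. This disc lies in the closed left half-plane and meets the imaginary axis
only at `0`.
-/

open Finset

namespace Complex

theorem norm_exp_neg_mul_ofReal_le_one {z : ℂ} {t : ℝ} (hz : 0 ≤ z.re) (ht : 0 ≤ t) :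
    ‖exp (-(z * t))‖ ≤ 1 := by
  rw [norm_exp, Real.exp_le_one_iff, neg_re, re_mul_ofReal, neg_nonpos]
  exact mul_nonneg hz ht

theorem eq_zero_of_norm_add_ofReal_le {z : ℂ} {k : ℝ} (hz : 0 ≤ z.re) (h : ‖z + k‖ ≤ k) :
    z = 0 := by
  have hk : 0 ≤ k := (norm_nonneg _).trans h
  have hsq : (z.re + k) ^ 2 + z.im ^ 2 ≤ k ^ 2 := by
    have := pow_le_pow_left₀ (norm_nonneg _) h 2
    rwa [Complex.sq_norm, normSq_apply, add_re, add_im, ofReal_re, ofReal_im, add_zero,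
      ← sq, ← sq] at this
  have hre : z.re = 0 := by nlinarith [sq_nonneg z.im]
  have him : z.im = 0 := by nlinarith
  exact ext hre him

end Complex

theorem Matrix.exists_norm_diag_le_sum_row_of_det_eq_zero {𝕜 ι : Type*} [NormedField 𝕜]
    [Fintype ι] [DecidableEq ι] {M : Matrix ι ι 𝕜} (h : M.det = 0) :
    ∃ k, ‖M k k‖ ≤ ∑ j ∈ univ.erase k, ‖M k j‖ := by
  by_contra! hlt
  exact det_ne_zero_of_sum_row_lt_diag hlt h

theorem exists_norm_add_diag_le_of_det_laplacian_eq_zero {ι : Type*} [Fintype ι] [DecidableEq ι]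
    {K A : Matrix ι ι ℝ} (hK : ∀ i j, i ≠ j → K i j = 0) (hA : ∀ i j, 0 ≤ A i j)
    (hrow : ∀ i, ∑ j, A i j = K i i) {lam e : ℂ} (he : ‖e‖ ≤ 1)
    (hdet : (lam • (1 : Matrix ι ι ℂ) + K.map Complex.ofReal - e • A.map Complex.ofReal).det = 0) :
    ∃ q, ‖lam + K q q‖ ≤ K q q := by
  set M := lam • (1 : Matrix ι ι ℂ) + K.map Complex.ofReal - e • A.map Complex.ofReal
  obtain ⟨q, hq⟩ := Matrix.exists_norm_diag_le_sum_row_of_det_eq_zero hdet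
  have hdiag : lam + K q q = M q q + e * A q q := by simp [M]
  have hoff : ∀ j ∈ univ.erase q, ‖M q j‖ = ‖e‖ * A q j := fun j hj => by
    have hjq : q ≠ j := (ne_of_mem_erase hj).symm
    simp [M, hK q j hjq, hjq, abs_of_nonneg (hA q j)]
  refine ⟨q, ?_⟩
  calc ‖lam + K q q‖
      ≤ ‖M q q‖ + ‖e‖ * A q q := by
        rw [hdiag]
        exact (norm_add_le _ _).trans_eq (by rw [norm_mul, Complex.norm_of_nonneg (hA q q)])
    _ ≤ ∑ j ∈ univ.erase q, ‖e‖ * A q j + ‖e‖ * A q q := by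
        rw [← sum_congr rfl hoff]
        gcongr
    _ = ‖e‖ * K q q := by rw [sum_erase_add _ _ (mem_univ q), ← mul_sum, hrow]
    _ ≤ K q q := mul_le_of_le_one_left (hrow q ▸ sum_nonneg fun j _ => hA q j) he

theorem consensus_char_roots_general (n : ℕ) (K A : Matrix (Fin n) (Fin n) ℝ)
    (hK : ∀ i j, i ≠ j → K i j = 0)
    (hA : ∀ i j, 0 ≤ A i j) (hrow : ∀ i, ∑ j, A i j = K i i)
    (τr : ℝ) (hτr : 0 ≤ τr) (lam : ℂ)
    (hroot : (lam • (1 : Matrix (Fin n) (Fin n) ℂ) + K.map Complex.ofReal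
        - Complex.exp (-(lam * τr)) • A.map Complex.ofReal).det = 0)
    (hre : 0 ≤ lam.re) :
    lam = 0 := by
  obtain ⟨q, hq⟩ := exists_norm_add_diag_le_of_det_laplacian_eq_zero hK hA hrow
    (Complex.norm_exp_neg_mul_ofReal_le_one hre hτr) hroot
  exact Complex.eq_zero_of_norm_add_ofReal_le hre hq

/-- For a Laplacian `L = K - A` (`K` diagonal nonnegative, `A` nonnegative with row sums
equal to the diagonal of `K`), every root `λ` of `det(λI + K - A e^{-λτ_r}) = 0` with
`Re λ ≥ 0` equals `0`. -/
theorem consensus_char_roots (n : ℕ) (K A : Matrix (Fin n) (Fin n) ℝ)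
    (hK : ∀ i j, i ≠ j → K i j = 0) (hKnn : ∀ i, 0 ≤ K i i)
    (hA : ∀ i j, 0 ≤ A i j) (hrow : ∀ i, ∑ j, A i j = K i i)
    (τr : ℝ) (hτr : 0 ≤ τr) (lam : ℂ)
    (hroot : (lam • (1 : Matrix (Fin n) (Fin n) ℂ) + K.map Complex.ofReal
        - Complex.exp (-(lam * τr)) • A.map Complex.ofReal).det = 0)
    (hre : 0 ≤ lam.re) :
    lam = 0 :=
  consensus_char_roots_general n K A hK hA hrow τr hτr lam hroot hre
end

section
/- Let K₂ and A₂₂ be real (n-m)×(n-m) matrices with K₂ diagonal, A₂₂ entrywise nonnegative, and row sums satisfying ∑_j (A₂₂)_{ij} < (K₂)_{ii} for every row i (strict diagonal dominance of K₂ - A₂₂). Then for any τ_r ≥ 0, every root μ ∈ ℂ of det(μI + K₂ - A₂₂·exp(-μτ_r)) = 0 satisfies Re(μ) < 0. -/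
/-!
For `Re μ ≥ 0` and `τ ≥ 0` we have `|e^{-μτ}| ≤ 1`, so in row `i` of `μI + K₂ - e^{-μτ} A₂₂` the
off-diagonal entries have modulus at most `(A₂₂)ᵢⱼ`, while the diagonal entry has real part at
least `(K₂)ᵢᵢ - (A₂₂)ᵢᵢ`. Strict dominance `∑ⱼ (A₂₂)ᵢⱼ < (K₂)ᵢᵢ` therefore makes the matrix strictly
diagonally dominant, and the Levy–Desplanques theorem says its determinant does not vanish.
-/

open Complex Finset

lemma norm_cexp_neg_mul_ofReal_le_one {μ : ℂ} {τ : ℝ} (hμ : 0 ≤ μ.re) (hτ : 0 ≤ τ) :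
    ‖exp (-(μ * τ))‖ ≤ 1 := by
  rw [norm_exp, Real.exp_le_one_iff, neg_re, re_mul_ofReal]
  exact neg_nonpos.mpr (mul_nonneg hμ hτ)

namespace Matrix

variable {n : Type*} [DecidableEq n]

/-- The characteristic matrix `μI + K - e A` of `ẏ = -K y(t) + A y(t - τ)`, with `e = e^{-μτ}`. -/
noncomputable def delayCharMatrix (K A : Matrix n n ℝ) (μ e : ℂ) : Matrix n n ℂ :=
  μ • 1 + K.map ofReal - e • A.map ofReal

variable {K A : Matrix n n ℝ} {μ e : ℂ}

lemma delayCharMatrix_apply_self (i : n) :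
    delayCharMatrix K A μ e i i = μ + K i i - e * A i i := by
  simp [delayCharMatrix]

lemma delayCharMatrix_apply_of_ne (hK : ∀ i j, i ≠ j → K i j = 0) {i j : n} (hij : i ≠ j) :
    delayCharMatrix K A μ e i j = -(e * A i j) := by
  simp [delayCharMatrix, one_apply_ne hij, hK i j hij]

lemma norm_delayCharMatrix_apply_of_ne_le (hK : ∀ i j, i ≠ j → K i j = 0)
    (hA : ∀ i j, 0 ≤ A i j) (he : ‖e‖ ≤ 1) {i j : n} (hij : i ≠ j) :
    ‖delayCharMatrix K A μ e i j‖ ≤ A i j := by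
  rw [delayCharMatrix_apply_of_ne hK hij, norm_neg, norm_mul, norm_real,
    Real.norm_of_nonneg (hA i j)]
  exact mul_le_of_le_one_left (hA i j) he

lemma sub_le_norm_delayCharMatrix_apply_self (hA : ∀ i j, 0 ≤ A i j) (he : ‖e‖ ≤ 1)
    (hμ : 0 ≤ μ.re) (i : n) :
    K i i - A i i ≤ ‖delayCharMatrix K A μ e i i‖ := by
  have he_re : e.re * A i i ≤ A i i :=
    mul_le_of_le_one_left (hA i i) ((re_le_norm e).trans he)
  calc K i i - A i i ≤ μ.re + K i i - e.re * A i i := by linarith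
    _ = (delayCharMatrix K A μ e i i).re := by
      rw [delayCharMatrix_apply_self, sub_re, add_re, ofReal_re, re_mul_ofReal]
    _ ≤ ‖delayCharMatrix K A μ e i i‖ := re_le_norm _

variable [Fintype n]

lemma sum_norm_delayCharMatrix_offDiag_lt (hK : ∀ i j, i ≠ j → K i j = 0)
    (hA : ∀ i j, 0 ≤ A i j) (hdom : ∀ i, ∑ j, A i j < K i i) (he : ‖e‖ ≤ 1)
    (hμ : 0 ≤ μ.re) (i : n) :
    ∑ j ∈ univ.erase i, ‖delayCharMatrix K A μ e i j‖ < ‖delayCharMatrix K A μ e i i‖ :=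
  calc ∑ j ∈ univ.erase i, ‖delayCharMatrix K A μ e i j‖
      ≤ ∑ j ∈ univ.erase i, A i j := sum_le_sum fun j hj ↦
        norm_delayCharMatrix_apply_of_ne_le hK hA he (ne_of_mem_erase hj).symm
    _ = ∑ j, A i j - A i i := sum_erase_eq_sub (mem_univ i)
    _ < K i i - A i i := by linarith [hdom i]
    _ ≤ ‖delayCharMatrix K A μ e i i‖ := sub_le_norm_delayCharMatrix_apply_self hA he hμ i

lemma det_delayCharMatrix_ne_zero (hK : ∀ i j, i ≠ j → K i j = 0)
    (hA : ∀ i j, 0 ≤ A i j) (hdom : ∀ i, ∑ j, A i j < K i i) (he : ‖e‖ ≤ 1)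
    (hμ : 0 ≤ μ.re) :
    (delayCharMatrix K A μ e).det ≠ 0 :=
  det_ne_zero_of_sum_row_lt_diag (sum_norm_delayCharMatrix_offDiag_lt hK hA hdom he hμ)

end Matrix

/-- If `K₂` is diagonal, `A₂₂` nonnegative, and `K₂ - A₂₂` is strictly diagonally
dominant, then every root of `det(μI + K₂ - A₂₂ e^{-μτ_r}) = 0` has negative real part. -/
theorem unpinned_subsystem_stable (k : ℕ) (K₂ A₂₂ : Matrix (Fin k) (Fin k) ℝ)
    (hK : ∀ i j, i ≠ j → K₂ i j = 0)
    (hA : ∀ i j, 0 ≤ A₂₂ i j) (hdom : ∀ i, ∑ j, A₂₂ i j < K₂ i i)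
    (τr : ℝ) (hτr : 0 ≤ τr) (μ : ℂ)
    (hroot : (μ • (1 : Matrix (Fin k) (Fin k) ℂ) + K₂.map Complex.ofReal
        - Complex.exp (-(μ * τr)) • A₂₂.map Complex.ofReal).det = 0) :
    μ.re < 0 := by
  by_contra! hμ
  exact Matrix.det_delayCharMatrix_ne_zero hK hA hdom
    (norm_cexp_neg_mul_ofReal_le_one hμ hτr) hμ hroot
end
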